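/- Let (X_1,…,X_n) be an H-frame on an open neighborhood V of 0 in ℝⁿ with X_j(0) = e_j for all j. Then there exist unique real numbers a_{kα}, indexed by k ∈ {1,…,n} and multi-indices α with ⟨α⟩ < w_k and |α| ≥ 2, such that for every k the polynomial function ψ̂_k(x) = x_k + Σ_{α : ⟨α⟩ < w_k, |α| ≥ 2} a_{kα} x^α has order w_k at 0 with respect to (X_1,…,X_n). Consequently the map ψ̂ = (ψ̂_1,…,ψ̂_n) produces privileged coordinates at 0 adapted to (X_1,…,X_n). -/

import Mathlib

open scoped BigOperators
open Filter Topology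

namespace Carnot

/-- Anisotropic dilation `t · x = (t^{w_1} x_1, …, t^{w_n} x_n)`. -/
def dil {n : ℕ} (w : Fin n → ℕ) (t : ℝ) (x : Fin n → ℝ) : Fin n → ℝ :=
  fun i => t ^ (w i) * x i

/-- Weighted length `⟨α⟩` of a multi-index. -/
def wlen {n : ℕ} (w : Fin n → ℕ) (α : Fin n → ℕ) : ℕ := ∑ i, w i * α i

/-- Length `|α|` of a multi-index. -/
def mlen {n : ℕ} (α : Fin n → ℕ) : ℕ := ∑ i, α i

/-- A vector field acting on a function: `(Xf)(x) = Df(x)[X(x)]`. -/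
noncomputable def vf {n : ℕ} (X : (Fin n → ℝ) → (Fin n → ℝ)) (f : (Fin n → ℝ) → ℝ) :
    (Fin n → ℝ) → ℝ :=
  fun x => fderiv ℝ f x (X x)

/-- Iterated action `X_I f = X_{i_1}(X_{i_2}(⋯(X_{i_k} f)))`. -/
noncomputable def vfSeq {n : ℕ} (X : Fin n → (Fin n → ℝ) → (Fin n → ℝ)) :
    List (Fin n) → ((Fin n → ℝ) → ℝ) → ((Fin n → ℝ) → ℝ)
  | [], f => f
  | i :: I, f => vf (X i) (vfSeq X I f)

/-- Weight `⟨I⟩` of a finite sequence of indices. -/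
def seqW {n : ℕ} (w : Fin n → ℕ) (I : List (Fin n)) : ℕ := (I.map w).sum

/-- The list `(1,…,1,2,…,2,…,n,…,n)` with `i` repeated `α i` times. -/
def multiList {n : ℕ} (α : Fin n → ℕ) : List (Fin n) :=
  (List.finRange n).flatMap fun i => List.replicate (α i) i

/-- `X^α f = X_1^{α_1} ⋯ X_n^{α_n} f`. -/
noncomputable def vfPow {n : ℕ} (X : Fin n → (Fin n → ℝ) → (Fin n → ℝ)) (α : Fin n → ℕ)
    (f : (Fin n → ℝ) → ℝ) : (Fin n → ℝ) → ℝ :=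
  vfSeq X (multiList α) f

/-- Partial derivative `∂^α f`. -/
noncomputable def pdPow {n : ℕ} (α : Fin n → ℕ) (f : (Fin n → ℝ) → ℝ) : (Fin n → ℝ) → ℝ :=
  vfPow (fun i => fun _ => Pi.single i (1 : ℝ)) α f

/-- Lie bracket of two vector fields. -/
noncomputable def lieBk {n : ℕ} (X Y : (Fin n → ℝ) → (Fin n → ℝ)) : (Fin n → ℝ) → (Fin n → ℝ) :=
  fun x => fderiv ℝ Y x (X x) - fderiv ℝ X x (Y x)

/-- A weight sequence: non-decreasing, positive, starting at `1`. -/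
structure IsWeight {n : ℕ} (w : Fin n → ℕ) : Prop where
  mono : Monotone w
  pos : ∀ i, 0 < w i
  first : ∀ h : 0 < n, w ⟨0, h⟩ = 1

/-- An `H`-frame on `V`. -/
structure IsHFrame {n : ℕ} (w : Fin n → ℕ) (X : Fin n → (Fin n → ℝ) → (Fin n → ℝ))
    (V : Set (Fin n → ℝ)) : Prop where
  smooth : ∀ j, ContDiffOn ℝ (⊤ : ℕ∞) (X j) V
  basis : ∀ x ∈ V, LinearIndependent ℝ fun j => X j x
  bracket : ∃ L : Fin n → Fin n → Fin n → (Fin n → ℝ) → ℝ,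
    (∀ i j k, ContDiffOn ℝ (⊤ : ℕ∞) (L i j k) V) ∧
    (∀ i j k, ¬ w k ≤ w i + w j → ∀ x ∈ V, L i j k x = 0) ∧
    ∀ i j, ∀ x ∈ V, lieBk (X i) (X j) x = ∑ k, L i j k x • X k x

/-- `f` has order `≥ N` at `a` with respect to the frame `X`. -/
def OrderGe {n : ℕ} (w : Fin n → ℕ) (X : Fin n → (Fin n → ℝ) → (Fin n → ℝ))
    (f : (Fin n → ℝ) → ℝ) (a : Fin n → ℝ) (N : ℕ) : Prop :=
  ∀ I : List (Fin n), seqW w I < N → vfSeq X I f a = 0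

/-- `f` has order exactly `N` at `a` with respect to the frame `X`. -/
def OrderEq {n : ℕ} (w : Fin n → ℕ) (X : Fin n → (Fin n → ℝ) → (Fin n → ℝ))
    (f : (Fin n → ℝ) → ℝ) (a : Fin n → ℝ) (N : ℕ) : Prop :=
  OrderGe w X f a N ∧ ∃ I : List (Fin n), seqW w I = N ∧ vfSeq X I f a ≠ 0

/-- `f` has weight `≥ N`. -/
def WeightGe {n : ℕ} (w : Fin n → ℕ) (f : (Fin n → ℝ) → ℝ) (N : ℤ) : Prop :=
  ∀ α : Fin n → ℕ, (wlen w α : ℤ) < N → pdPow α f 0 = 0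

/-- `f` has weight exactly `N`. -/
def WeightEq {n : ℕ} (w : Fin n → ℕ) (f : (Fin n → ℝ) → ℝ) (N : ℤ) : Prop :=
  WeightGe w f N ∧ ∃ α : Fin n → ℕ, (wlen w α : ℤ) = N ∧ pdPow α f 0 ≠ 0

/-- A pseudo-norm for the anisotropic dilations. -/
structure IsPseudoNorm {n : ℕ} (w : Fin n → ℕ) (ρ : (Fin n → ℝ) → ℝ) : Prop where
  cont : Continuous ρ
  nonneg : ∀ x, 0 ≤ ρ x
  pos : ∀ x, x ≠ 0 → 0 < ρ x
  homog : ∀ t x, ρ (dil w t x) = |t| * ρ x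

/-- Multi-indices with all entries `< B`. -/
def mIdx (n B : ℕ) : Finset (Fin n → ℕ) := Fintype.piFinset fun _ => Finset.range B

/-- The monomial `x^α`. -/
def monom {n : ℕ} (α : Fin n → ℕ) (x : Fin n → ℝ) : ℝ := ∏ i, x i ^ α i

/-- Taylor coefficient `(1/α!) ∂^α f(0)`. -/
noncomputable def taylorCoeff {n : ℕ} (α : Fin n → ℕ) (f : (Fin n → ℝ) → ℝ) : ℝ :=
  ((∏ i, Nat.factorial (α i) : ℕ) : ℝ)⁻¹ * pdPow α f 0

/-- The homogeneous part `f^[ℓ]` of degree `ℓ` of the Taylor series of `f` at `0`. -/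
noncomputable def homPart {n : ℕ} (w : Fin n → ℕ) (f : (Fin n → ℝ) → ℝ) (ℓ : ℕ) :
    (Fin n → ℝ) → ℝ :=
  fun x => ∑ α ∈ (mIdx n (ℓ + 1)).filter (fun α => wlen w α = ℓ),
    taylorCoeff α f * monom α x

/-- `u_t = O(t^m)` in `C^∞(U)` as `t → 0`. -/
def BigOC {n : ℕ} (U : Set (Fin n → ℝ)) (u : ℝ → (Fin n → ℝ) → ℝ) (m : ℤ) : Prop :=
  ∀ K : Set (Fin n → ℝ), K ⊆ U → IsCompact K → ∀ β : Fin n → ℕ,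
    ∃ C : ℝ, ∀ᶠ t in 𝓝[≠] (0 : ℝ), ∀ x ∈ K, |pdPow β (u t) x| ≤ C * |t| ^ m

/-- Componentwise `O(t^m)` in `C^∞(U)` for families of vector fields. -/
def BigOCVF {n : ℕ} (U : Set (Fin n → ℝ)) (u : ℝ → (Fin n → ℝ) → Fin n → ℝ)
    (m : ℤ) : Prop :=
  ∀ K : Set (Fin n → ℝ), K ⊆ U → IsCompact K → ∀ β : Fin n → ℕ, ∀ k : Fin n,
    ∃ C : ℝ, ∀ᶠ t in 𝓝[≠] (0 : ℝ), ∀ x ∈ K,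
      |pdPow β (fun y => u t y k) x| ≤ C * |t| ^ m

/-- `Θ = O_w(‖x‖^{w+m})` near `x = 0`. -/
def IsOw {n : ℕ} (w : Fin n → ℕ) (ρ : (Fin n → ℝ) → ℝ)
    (Θ : (Fin n → ℝ) → (Fin n → ℝ)) (m : ℤ) : Prop :=
  ∀ k, ∃ C : ℝ, ∀ᶠ x in 𝓝 (0 : Fin n → ℝ), |Θ x k| ≤ C * ρ x ^ ((w k : ℤ) + m)

/-- A `w`-homogeneous map. -/
def WHomog {n : ℕ} (w : Fin n → ℕ) (φ : (Fin n → ℝ) → (Fin n → ℝ)) : Prop :=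
  ∀ t x, φ (dil w t x) = dil w t (φ x)

/-- A map whose components are polynomial functions. -/
def IsPolyMap {n : ℕ} (φ : (Fin n → ℝ) → (Fin n → ℝ)) : Prop :=
  ∀ k, ∃ p : MvPolynomial (Fin n) ℝ, ∀ x, φ x k = MvPolynomial.eval x p

/-- A vector field homogeneous of degree `m`: `δ_t^* Y = t^m Y` for `t ≠ 0`. -/
def VFHomog {n : ℕ} (w : Fin n → ℕ) (Y : (Fin n → ℝ) → (Fin n → ℝ)) (m : ℤ) : Prop :=
  ∀ t : ℝ, t ≠ 0 → ∀ x k, (t : ℝ) ^ (-(w k : ℤ)) * Y (dil w t x) k = t ^ m * Y x k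

/-- A vector field has weight `W`: each component `X_k` has weight `≥ W + w_k`,
with equality for some `k`. -/
def VFWeightEq {n : ℕ} (w : Fin n → ℕ) (X : (Fin n → ℝ) → (Fin n → ℝ)) (W : ℤ) :
    Prop :=
  (∀ k, ∀ α : Fin n → ℕ, (wlen w α : ℤ) < W + w k →
    pdPow α (fun y => X y k) 0 = 0) ∧
  ∃ k, ∃ α : Fin n → ℕ, (wlen w α : ℤ) = W + w k ∧ pdPow α (fun y => X y k) 0 ≠ 0

/-- The homogeneous part `X^[ℓ]` of degree `ℓ` of a vector field. -/
noncomputable def vfPart {n : ℕ} (w : Fin n → ℕ) (X : (Fin n → ℝ) → (Fin n → ℝ)) (ℓ : ℤ) :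
    (Fin n → ℝ) → Fin n → ℝ :=
  fun x k => ∑ α ∈ (mIdx n ((ℓ + w k).toNat + 1)).filter
      (fun α => (wlen w α : ℤ) = ℓ + w k),
    taylorCoeff α (fun y => X y k) * monom α x

/-- `φ` produces privileged coordinates at `a` adapted to the `H`-frame `X`:
it is linearly adapted at `a` and each component has order `w_k` at `a`. -/
def PrivilegedAt {n : ℕ} (w : Fin n → ℕ) (X : Fin n → (Fin n → ℝ) → (Fin n → ℝ))
    (a : Fin n → ℝ) (φ : (Fin n → ℝ) → (Fin n → ℝ)) : Prop :=
  (∀ j, fderiv ℝ φ a (X j a) = Pi.single j 1) ∧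
  ∀ k, OrderEq w X (fun x => φ x k) a (w k)



section Aux

variable {n : ℕ} {V : Set (Fin n → ℝ)}

/-- smooth at every point of `V`. -/
def SmOn (V : Set (Fin n → ℝ)) (g : (Fin n → ℝ) → ℝ) : Prop :=
  ∀ x ∈ V, ContDiffAt ℝ (⊤ : ℕ∞) g x

def SmOnV (V : Set (Fin n → ℝ)) (Y : (Fin n → ℝ) → (Fin n → ℝ)) : Prop :=
  ∀ x ∈ V, ContDiffAt ℝ (⊤ : ℕ∞) Y x

theorem SmOn.vf {Y : (Fin n → ℝ) → (Fin n → ℝ)} {g : (Fin n → ℝ) → ℝ}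
    (hY : SmOnV V Y) (hg : SmOn V g) : SmOn V (vf Y g) := by
  intro x hx
  exact ((hg x hx).fderiv_right (m := (⊤ : ℕ∞)) (by simp)).clm_apply (hY x hx)

theorem SmOn.diffAt {g : (Fin n → ℝ) → ℝ} (hg : SmOn V g) {x} (hx : x ∈ V) :
    DifferentiableAt ℝ g x :=
  (hg x hx).differentiableAt (by simp)

theorem SmOn.vfSeq {X : Fin n → (Fin n → ℝ) → (Fin n → ℝ)}
    (hX : ∀ i, SmOnV V (X i)) {f : (Fin n → ℝ) → ℝ} (hf : SmOn V f) :
    ∀ I : List (Fin n), SmOn V (vfSeq X I f)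
  | [] => hf
  | i :: I => (SmOn.vfSeq hX hf I).vf (hX i)

theorem vfSeq_append {X : Fin n → (Fin n → ℝ) → (Fin n → ℝ)} (A B : List (Fin n))
    (f : (Fin n → ℝ) → ℝ) : vfSeq X (A ++ B) f = vfSeq X A (vfSeq X B f) := by
  induction A with
  | nil => rfl
  | cons i A ih => simp [vfSeq, ih]

theorem vfSeq_congr (hV : IsOpen V) {X : Fin n → (Fin n → ℝ) → (Fin n → ℝ)}
    {f g : (Fin n → ℝ) → ℝ} (hfg : ∀ x ∈ V, f x = g x) :
    ∀ (I : List (Fin n)), ∀ x ∈ V, vfSeq X I f x = vfSeq X I g x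
  | [], x, hx => hfg x hx
  | i :: I, x, hx => by
    have h : vfSeq X I f =ᶠ[𝓝 x] vfSeq X I g :=
      Filter.eventuallyEq_of_mem (hV.mem_nhds hx) (vfSeq_congr hV hfg I)
    simp only [vfSeq, vf, h.fderiv_eq]

theorem vf_add {Y : (Fin n → ℝ) → (Fin n → ℝ)} {f g : (Fin n → ℝ) → ℝ} {x : Fin n → ℝ}
    (hf : DifferentiableAt ℝ f x) (hg : DifferentiableAt ℝ g x) :
    vf Y (fun y => f y + g y) x = vf Y f x + vf Y g x := by
  simp only [vf, fderiv_fun_add hf hg]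
  rfl

theorem vf_mul {Y : (Fin n → ℝ) → (Fin n → ℝ)} {f g : (Fin n → ℝ) → ℝ} {x : Fin n → ℝ}
    (hf : DifferentiableAt ℝ f x) (hg : DifferentiableAt ℝ g x) :
    vf Y (fun y => f y * g y) x = vf Y f x * g x + f x * vf Y g x := by
  have := (hf.hasFDerivAt.fun_mul hg.hasFDerivAt).fderiv
  simp only [vf, this]
  simp only [ContinuousLinearMap.add_apply, ContinuousLinearMap.smul_apply, smul_eq_mul]
  ring

theorem vfSeq_add (hV : IsOpen V) {X : Fin n → (Fin n → ℝ) → (Fin n → ℝ)}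
    (hX : ∀ i, SmOnV V (X i)) {f g : (Fin n → ℝ) → ℝ} (hf : SmOn V f) (hg : SmOn V g) :
    ∀ (I : List (Fin n)), ∀ x ∈ V, vfSeq X I (fun y => f y + g y) x
      = vfSeq X I f x + vfSeq X I g x
  | [], x, hx => rfl
  | i :: I, x, hx => by
    have h : vfSeq X I (fun y => f y + g y) =ᶠ[𝓝 x]
        fun y => vfSeq X I f y + vfSeq X I g y :=
      Filter.eventuallyEq_of_mem (hV.mem_nhds hx) (vfSeq_add hV hX hf hg I)
    simp only [vfSeq, vf, h.fderiv_eq]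
    exact vf_add ((hf.vfSeq hX I).diffAt hx) ((hg.vfSeq hX I).diffAt hx)

theorem vfSeq_const_mul (hV : IsOpen V) {X : Fin n → (Fin n → ℝ) → (Fin n → ℝ)}
    (hX : ∀ i, SmOnV V (X i)) {f : (Fin n → ℝ) → ℝ} (hf : SmOn V f) (c : ℝ) :
    ∀ (I : List (Fin n)), ∀ x ∈ V, vfSeq X I (fun y => c * f y) x = c * vfSeq X I f x
  | [], x, hx => rfl
  | i :: I, x, hx => by
    have h : vfSeq X I (fun y => c * f y) =ᶠ[𝓝 x] fun y => c * vfSeq X I f y :=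
      Filter.eventuallyEq_of_mem (hV.mem_nhds hx) (vfSeq_const_mul hV hX hf c I)
    simp only [vfSeq, vf, h.fderiv_eq, fderiv_const_mul ((hf.vfSeq hX I).diffAt hx)]
    rfl

theorem SmOn.add {f g : (Fin n → ℝ) → ℝ} (hf : SmOn V f) (hg : SmOn V g) :
    SmOn V (fun y => f y + g y) := fun x hx => (hf x hx).add (hg x hx)

theorem SmOn.mul {f g : (Fin n → ℝ) → ℝ} (hf : SmOn V f) (hg : SmOn V g) :
    SmOn V (fun y => f y * g y) := fun x hx => (hf x hx).mul (hg x hx)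

theorem SmOn.const_mul {f : (Fin n → ℝ) → ℝ} (hf : SmOn V f) (c : ℝ) :
    SmOn V (fun y => c * f y) := fun x hx => (contDiffAt_const).mul (hf x hx)

theorem smOn_const (c : ℝ) : SmOn V (fun _ => c) := fun _ _ => contDiffAt_const

theorem vfSeq_finset_sum (hV : IsOpen V) {X : Fin n → (Fin n → ℝ) → (Fin n → ℝ)}
    (hX : ∀ i, SmOnV V (X i)) {γ : Type*} (s : Finset γ) (F : γ → (Fin n → ℝ) → ℝ)
    (hF : ∀ a ∈ s, SmOn V (F a)) (I : List (Fin n)) :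
    ∀ x ∈ V, vfSeq X I (fun y => ∑ a ∈ s, F a y) x = ∑ a ∈ s, vfSeq X I (F a) x := by
  classical
  induction s using Finset.induction with
  | empty =>
    intro x hx
    simp only [Finset.sum_empty]
    rw [vfSeq_congr hV (g := fun _ => (0:ℝ)) (fun _ _ => rfl) I x hx,
      show (fun _ : Fin n → ℝ => (0:ℝ)) = (fun y => (0:ℝ) * (fun _ => (0:ℝ)) y) by
        funext; ring,
      vfSeq_const_mul hV hX (smOn_const 0) 0 I x hx]
    ring
  | @insert a s ha ih =>
    intro x hx
    have hFs : ∀ b ∈ s, SmOn V (F b) := fun b hb => hF b (Finset.mem_insert_of_mem hb)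
    have hsum : SmOn V (fun y => ∑ b ∈ s, F b y) := by
      intro y hy
      exact ContDiffAt.sum (fun b hb => hFs b hb y hy)
    rw [vfSeq_congr hV (g := fun y => F a y + ∑ b ∈ s, F b y)
      (fun y _ => Finset.sum_insert ha) I x hx,
      vfSeq_add hV hX (hF a (Finset.mem_insert_self a s)) hsum I x hx,
      Finset.sum_insert ha]
    congr 1
    exact ih hFs x hx


/-! ### Masks and the Leibniz rule -/

def masks : ℕ → List (List Bool)
  | 0 => [[]]
  | m + 1 => (masks m).flatMap fun b => [true :: b, false :: b]

def sel {γ : Type*} : List γ → List Bool → Bool → List γ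
  | [], _, _ => []
  | _ :: _, [], _ => []
  | i :: I, c :: b, tv => if c = tv then i :: sel I b tv else sel I b tv

theorem length_mem_masks {m : ℕ} : ∀ b ∈ masks m, b.length = m := by
  induction m with
  | zero => intro b hb; simp [masks] at hb; simp [hb]
  | succ m ih =>
    intro b hb
    simp only [masks, List.mem_flatMap] at hb
    obtain ⟨c, hc, hb⟩ := hb
    simp only [List.mem_cons, List.mem_singleton, List.not_mem_nil, or_false] at hb
    rcases hb with h | h <;> subst h <;> simp [ih c hc]

theorem sel_length_add {γ : Type*} :
    ∀ (I : List γ) (b : List Bool), b.length = I.length →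
      (sel I b true).length + (sel I b false).length = I.length
  | [], b, h => by simp [sel]
  | i :: I, [], h => by simp at h
  | i :: I, c :: b, h => by
    have hb : b.length = I.length := by simpa using h
    have := sel_length_add I b hb
    cases c <;> simp [sel] <;> omega

theorem sel_sublist {γ : Type*} :
    ∀ (I : List γ) (b : List Bool) (tv : Bool), (sel I b tv).Sublist I
  | [], _, _ => by simp [sel]
  | i :: I, [], tv => by simp [sel]
  | i :: I, c :: b, tv => by
    by_cases h : c = tv
    · simpa [sel, h] using (sel_sublist I b tv).cons₂ i
    · simpa [sel, h] using (sel_sublist I b tv).cons i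

theorem list_sum_map_add {γ : Type*} : ∀ (l : List γ) (F G : γ → ℝ),
    (l.map fun b => F b + G b).sum = (l.map F).sum + (l.map G).sum
  | [], _, _ => by simp
  | b :: l, F, G => by
    simp only [List.map_cons, List.sum_cons, list_sum_map_add l F G]; ring

theorem diffAt_list_sum {γ : Type*} {x : Fin n → ℝ} :
    ∀ (l : List γ) (F : γ → (Fin n → ℝ) → ℝ), (∀ b ∈ l, DifferentiableAt ℝ (F b) x) →
      DifferentiableAt ℝ (fun y => (l.map fun b => F b y).sum) x
  | [], F, h => by simpa using differentiableAt_const (0:ℝ)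
  | b :: l, F, h => by
    simp only [List.map_cons, List.sum_cons]
    exact (h b (by simp)).add (diffAt_list_sum l F fun c hc => h c (by simp [hc]))

theorem vf_list_sum {γ : Type*} {Y : (Fin n → ℝ) → (Fin n → ℝ)} {x : Fin n → ℝ} :
    ∀ (l : List γ) (F : γ → (Fin n → ℝ) → ℝ), (∀ b ∈ l, DifferentiableAt ℝ (F b) x) →
      vf Y (fun y => (l.map fun b => F b y).sum) x = (l.map fun b => vf Y (F b) x).sum
  | [], F, h => by simp [vf, fderiv_const]
  | b :: l, F, h => by
    simp only [List.map_cons, List.sum_cons]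
    rw [vf_add (h b (by simp)) (diffAt_list_sum l F fun c hc => h c (by simp [hc])),
      vf_list_sum l F fun c hc => h c (by simp [hc])]

/-- Leibniz rule for iterated vector field derivatives. -/
theorem vfSeq_mul (hV : IsOpen V) {X : Fin n → (Fin n → ℝ) → (Fin n → ℝ)}
    (hX : ∀ i, SmOnV V (X i)) {u v : (Fin n → ℝ) → ℝ} (hu : SmOn V u) (hv : SmOn V v) :
    ∀ (I : List (Fin n)), ∀ x ∈ V,
      vfSeq X I (fun y => u y * v y) x =
        ((masks I.length).map fun b =>
          vfSeq X (sel I b true) u x * vfSeq X (sel I b false) v x).sum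
  | [], x, hx => by simp [masks, vfSeq, sel]
  | i :: I, x, hx => by
    have hrec := vfSeq_mul hV hX hu hv I
    have h : vfSeq X I (fun y => u y * v y) =ᶠ[𝓝 x]
        fun y => ((masks I.length).map fun b =>
          vfSeq X (sel I b true) u y * vfSeq X (sel I b false) v y).sum :=
      Filter.eventuallyEq_of_mem (hV.mem_nhds hx) hrec
    have step1 : vfSeq X (i :: I) (fun y => u y * v y) x
        = ((masks I.length).map fun b =>
            vf (X i) (fun y => vfSeq X (sel I b true) u y * vfSeq X (sel I b false) v y) x).sum := by
      show vf (X i) (vfSeq X I fun y => u y * v y) x = _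
      rw [show vf (X i) (vfSeq X I fun y => u y * v y) x
          = vf (X i) (fun y => ((masks I.length).map fun b =>
              vfSeq X (sel I b true) u y * vfSeq X (sel I b false) v y).sum) x from by
        simp only [vf, h.fderiv_eq]]
      exact vf_list_sum _ _ fun b _ =>
        (((hu.vfSeq hX _).mul (hv.vfSeq hX _)) x hx).differentiableAt (by simp)
    rw [step1]
    have hterm : ∀ b ∈ masks I.length,
        vf (X i) (fun y => vfSeq X (sel I b true) u y * vfSeq X (sel I b false) v y) x
        = vfSeq X (sel (i :: I) (true :: b) true) u x * vfSeq X (sel (i :: I) (true :: b) false) v x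
          + vfSeq X (sel (i :: I) (false :: b) true) u x * vfSeq X (sel (i :: I) (false :: b) false) v x := by
      intro b _
      rw [vf_mul (((hu.vfSeq hX _) x hx).differentiableAt (by simp))
        (((hv.vfSeq hX _) x hx).differentiableAt (by simp))]
      simp only [sel, if_pos rfl]
      norm_num [vfSeq]
    show _ = ((masks (I.length + 1)).map fun b =>
        vfSeq X (sel (i :: I) b true) u x * vfSeq X (sel (i :: I) b false) v x).sum
    simp only [masks, List.flatMap, List.map_flatten, List.map_map, List.sum_flatten]
    rw [List.map_congr_left (fun b hb => hterm b hb)]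
    rw [show ((List.sum ∘ (List.map fun b => vfSeq X (sel (i :: I) b true) u x * vfSeq X (sel (i :: I) b false) v x) ∘ fun b => [true :: b, false :: b]))
        = fun b => (vfSeq X (sel (i :: I) (true :: b) true) u x * vfSeq X (sel (i :: I) (true :: b) false) v x
          + (vfSeq X (sel (i :: I) (false :: b) true) u x * vfSeq X (sel (i :: I) (false :: b) false) v x + 0)) from rfl]
    rw [list_sum_map_add (masks I.length)
      (fun b => vfSeq X (sel (i :: I) (true :: b) true) u x * vfSeq X (sel (i :: I) (true :: b) false) v x)
      (fun b => vfSeq X (sel (i :: I) (false :: b) true) u x * vfSeq X (sel (i :: I) (false :: b) false) v x + 0)]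
    simp [list_sum_map_add]

/-- The count function of a list. -/
def countFn (I : List (Fin n)) : Fin n → ℕ := fun j => I.count j

theorem count_multiList (α : Fin n → ℕ) (j : Fin n) : (multiList α).count j = α j := by
  unfold multiList
  rw [List.flatMap, List.count_flatten, List.map_map]
  have : ∀ i : Fin n, (List.count j ∘ fun i => List.replicate (α i) i) i
      = if i = j then α i else 0 := by
    intro i
    simp only [Function.comp_apply, List.count_replicate, beq_iff_eq]
  rw [List.map_congr_left fun i _ => this i]
  rw [← Fin.sum_univ_def]
  simp

theorem sorted_multiList (α : Fin n → ℕ) : List.Pairwise (· ≤ ·) (multiList α) := by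
  unfold multiList
  rw [List.flatMap, List.pairwise_flatten]
  refine ⟨fun l hl => ?_, ?_⟩
  · simp only [List.mem_map] at hl
    obtain ⟨i, _, rfl⟩ := hl
    exact List.pairwise_replicate.2 (by simp)
  · have : List.Pairwise (· < ·) (List.finRange n) := by
      rw [List.pairwise_iff_get]
      intro s t hst
      simpa using hst
    refine List.Pairwise.map _ ?_ this
    intro i i' hii' a ha b hb
    rw [List.eq_of_mem_replicate ha, List.eq_of_mem_replicate hb]
    exact hii'.le

theorem multiList_countFn_of_sorted {I : List (Fin n)} (hI : List.Pairwise (· ≤ ·) I) :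
    multiList (countFn I) = I := by
  refine List.Perm.eq_of_pairwise' (sorted_multiList _) hI ?_
  rw [List.perm_iff_count]
  intro j
  rw [count_multiList]
  rfl

theorem length_multiList (α : Fin n → ℕ) : (multiList α).length = mlen α := by
  unfold multiList mlen
  rw [List.length_flatMap]
  rw [← Fin.sum_univ_def]
  simp

theorem seqW_multiList (w : Fin n → ℕ) (α : Fin n → ℕ) :
    seqW w (multiList α) = wlen w α := by
  unfold multiList seqW wlen
  rw [List.flatMap, List.map_flatten, List.sum_flatten, List.map_map, List.map_map]
  rw [show (((List.sum ∘ List.map w) ∘ fun i => List.replicate (α i) i))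
      = fun i => α i * w i from by funext i; simp [List.map_replicate]]
  rw [← Fin.sum_univ_def]
  exact Finset.sum_congr rfl fun i _ => mul_comm _ _

theorem multiList_zero : multiList (fun _ : Fin n => 0) = [] := by
  simp [multiList]

/-- The multi-index `e_j`. -/
def eIdx (j : Fin n) : Fin n → ℕ := fun i => if i = j then 1 else 0

theorem multiList_eIdx (j : Fin n) : multiList (eIdx j) = [j] := by
  refine List.Perm.eq_of_pairwise' (sorted_multiList _) (by simp) ?_
  rw [List.perm_iff_count]
  intro i
  rw [count_multiList]
  unfold eIdx
  by_cases h : i = j <;> simp [h, List.count_singleton, @eq_comm _ j i]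

theorem wlen_eIdx (w : Fin n → ℕ) (j : Fin n) : wlen w (eIdx j) = w j := by
  unfold wlen eIdx
  rw [Finset.sum_eq_single j] <;> simp +contextual

theorem mlen_eIdx (j : Fin n) : mlen (eIdx j) = 1 := by
  unfold mlen eIdx
  rw [Finset.sum_eq_single j] <;> simp +contextual

theorem wlen_countFn (w : Fin n → ℕ) : ∀ I : List (Fin n), wlen w (countFn I) = seqW w I
  | [] => by simp [wlen, countFn, seqW]
  | i :: I => by
    have : countFn (i :: I) = fun j => countFn I j + eIdx i j := by
      funext j
      simp only [countFn, List.count_cons, eIdx, beq_iff_eq]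
      by_cases h : i = j
      · subst h; simp
      · simp [h, Ne.symm h]
    rw [this]
    have : wlen w (fun j => countFn I j + eIdx i j) = wlen w (countFn I) + wlen w (eIdx i) := by
      unfold wlen
      rw [← Finset.sum_add_distrib]
      exact Finset.sum_congr rfl fun j _ => by ring
    rw [this, wlen_countFn w I, wlen_eIdx]
    simp only [seqW, List.map_cons, List.sum_cons]
    ring

theorem mlen_eq_one_iff {α : Fin n → ℕ} (h : mlen α = 1) : ∃ j, α = eIdx j := by
  unfold mlen at h
  obtain ⟨j, hj⟩ : ∃ j, α j ≠ 0 := by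
    by_contra hc
    push_neg at hc
    simp [hc] at h
  refine ⟨j, funext fun i => ?_⟩
  have h1 : α j + ∑ i ∈ Finset.univ.erase j, α i = 1 := by
    rw [Finset.add_sum_erase _ α (Finset.mem_univ j)]; exact h
  have hje : α j = 1 := by omega
  have hz : ∀ i ∈ Finset.univ.erase j, α i = 0 := by
    intro i hi
    have := Finset.single_le_sum (f := α) (fun k _ => Nat.zero_le _) hi
    omega
  unfold eIdx
  by_cases hij : i = j
  · simp [hij, hje]
  · simpa [hij] using hz i (by simp [hij])

theorem mlen_le_wlen {w : Fin n → ℕ} (hw : ∀ i, 0 < w i) (α : Fin n → ℕ) :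
    mlen α ≤ wlen w α := by
  unfold mlen wlen
  exact Finset.sum_le_sum fun i _ => Nat.le_mul_of_pos_left _ (hw i)

theorem apply_le_mlen (α : Fin n → ℕ) (i : Fin n) : α i ≤ mlen α :=
  Finset.single_le_sum (f := α) (fun _ _ => Nat.zero_le _) (Finset.mem_univ i)


/-! ### Vanishing order -/

section Van

variable (V : Set (Fin n → ℝ)) (X : Fin n → (Fin n → ℝ) → (Fin n → ℝ))

/-- `g` vanishes to order `≥ N` at `0` (w.r.t. the frame `X`). -/
def Van (N : ℕ) (g : (Fin n → ℝ) → ℝ) : Prop :=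
  SmOn V g ∧ ∀ I : List (Fin n), I.length < N → vfSeq X I g 0 = 0

variable {V X}

theorem Van.anti {a b : ℕ} {g} (h : Van V X a g) (hba : b ≤ a) : Van V X b g :=
  ⟨h.1, fun I hI => h.2 I (lt_of_lt_of_le hI hba)⟩

theorem sel_count {γ : Type*} :
    ∀ (I : List γ) (b : List Bool) (tv : Bool), b.length = I.length →
      (sel I b tv).length = b.count tv
  | [], b, tv, h => by
    simp only [List.length_nil] at h
    rw [List.length_eq_zero_iff] at h
    simp [h, sel]
  | i :: I, [], tv, h => by simp at h
  | i :: I, c :: b, tv, h => by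
    have hb : b.length = I.length := by simpa using h
    have := sel_count I b tv hb
    by_cases hc : c = tv <;> simp [sel, hc, List.count_cons, this, eq_comm]

theorem Van.mul (hV : IsOpen V) (h0 : (0 : Fin n → ℝ) ∈ V) (hX : ∀ i, SmOnV V (X i))
    {a b : ℕ} {u v} (hu : Van V X a u) (hv : Van V X b v) :
    Van V X (a + b) (fun y => u y * v y) := by
  refine ⟨hu.1.mul hv.1, fun I hI => ?_⟩
  rw [vfSeq_mul hV hX hu.1 hv.1 I 0 h0]
  apply List.sum_eq_zero
  intro r hr
  simp only [List.mem_map] at hr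
  obtain ⟨c, hc, rfl⟩ := hr
  have hlen := length_mem_masks c hc
  have hadd := sel_length_add I c hlen
  by_cases h1 : (sel I c true).length < a
  · rw [hu.2 _ h1, zero_mul]
  · have h2 : (sel I c false).length < b := by omega
    rw [hv.2 _ h2, mul_zero]

theorem Van.coord (j : Fin n) : Van V X 1 (fun y : Fin n → ℝ => y j) := by
  constructor
  · intro x hx
    exact (ContinuousLinearMap.proj (R := ℝ) (φ := fun _ : Fin n => ℝ) j).contDiff.contDiffAt
  · intro I hI
    interval_cases h : I.length
    · rw [List.length_eq_zero_iff] at h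
      subst h
      simp [vfSeq]

/-- decrement a multi-index. -/
def decIdx {n : ℕ} (α : Fin n → ℕ) (j : Fin n) : Fin n → ℕ := Function.update α j (α j - 1)

theorem monom_split {α : Fin n → ℕ} {j : Fin n} (hj : 1 ≤ α j) :
    monom α = fun y => y j * monom (decIdx α j) y := by
  funext y
  unfold monom decIdx
  rw [← Finset.mul_prod_erase _ _ (Finset.mem_univ j),
    ← Finset.mul_prod_erase _ (fun i => y i ^ Function.update α j (α j - 1) i)
      (Finset.mem_univ j)]
  rw [Function.update_self, ← mul_assoc]
  congr 1
  · rw [← pow_succ']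
    congr 1
    omega
  · apply Finset.prod_congr rfl
    intro i hi
    rw [Function.update_of_ne (Finset.ne_of_mem_erase hi)]

theorem mlen_decIdx {α : Fin n → ℕ} {j : Fin n} (hj : 1 ≤ α j) :
    mlen α = mlen (decIdx α j) + 1 := by
  unfold mlen decIdx
  rw [← Finset.add_sum_erase _ α (Finset.mem_univ j),
    ← Finset.add_sum_erase _ _ (Finset.mem_univ j), Function.update_self]
  have heq : (∑ i ∈ Finset.univ.erase j, Function.update α j (α j - 1) i)
      = ∑ i ∈ Finset.univ.erase j, α i :=
    Finset.sum_congr rfl fun i hi => Function.update_of_ne (Finset.ne_of_mem_erase hi) _ _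
  omega

theorem decIdx_add {α : Fin n → ℕ} {j : Fin n} (hj : 1 ≤ α j) :
    (fun i => decIdx α j i + eIdx j i) = α := by
  funext i
  unfold decIdx eIdx
  by_cases h : i = j
  · subst h; simp; omega
  · simp [h, Function.update_of_ne h]

theorem mlen_pos_exists {α : Fin n → ℕ} (h : mlen α ≠ 0) : ∃ j, 1 ≤ α j := by
  by_contra hc
  push_neg at hc
  exact h (Finset.sum_eq_zero fun i _ => by have := hc i; omega)

theorem smOn_monom (α : Fin n → ℕ) : SmOn V (monom α) := by
  intro x hx
  have : ContDiff ℝ (⊤ : ℕ∞) (monom α) := by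
    unfold monom
    have : ∀ s : Finset (Fin n), ContDiff ℝ (⊤ : ℕ∞) (fun x : Fin n → ℝ => ∏ i ∈ s, x i ^ α i) := by
      intro s
      induction s using Finset.induction with
      | empty => simpa using contDiff_const
      | @insert a s ha ih =>
        have : (fun x : Fin n → ℝ => ∏ i ∈ insert a s, x i ^ α i)
            = fun x => x a ^ α a * ∏ i ∈ s, x i ^ α i := by
          funext x; rw [Finset.prod_insert ha]
        rw [this]
        exact (((ContinuousLinearMap.proj (R := ℝ) (φ := fun _ : Fin n => ℝ)
          a).contDiff).pow _).mul ih
    exact this Finset.univ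
  exact this.contDiffAt

theorem Van.monomOrd (hV : IsOpen V) (h0 : (0 : Fin n → ℝ) ∈ V) (hX : ∀ i, SmOnV V (X i)) :
    ∀ (m : ℕ) (α : Fin n → ℕ), mlen α = m → Van V X m (monom α) := by
  intro m
  induction m with
  | zero => exact fun α _ => ⟨smOn_monom α, fun I hI => absurd hI (by omega)⟩
  | succ m ih =>
    intro α hm
    obtain ⟨j, hj⟩ := mlen_pos_exists (α := α) (by omega)
    rw [monom_split hj]
    have hdec : mlen (decIdx α j) = m := by have := mlen_decIdx (α := α) hj; omega
    have := (Van.coord (V := V) (X := X) j).mul hV h0 hX (ih _ hdec)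
    simpa [Nat.add_comm] using this
end Van

/-! ### Enumeration of one-hot masks and the diagonal lemma -/

def oneHot : ℕ → ℕ → List Bool
  | 0, _ => []
  | m + 1, 0 => true :: List.replicate m false
  | m + 1, t + 1 => false :: oneHot m t

theorem mem_masks_cons {m : ℕ} {b : List Bool} (hb : b ∈ masks m) (c : Bool) :
    (c :: b) ∈ masks (m + 1) := by
  show _ ∈ (masks m).flatMap fun b => [true :: b, false :: b]
  rw [List.mem_flatMap]
  exact ⟨b, hb, by cases c <;> simp⟩

theorem masks_sum_split (m : ℕ) (f : List Bool → ℝ) :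
    ((masks (m + 1)).map f).sum
      = ((masks m).map fun b => f (true :: b)).sum
        + ((masks m).map fun b => f (false :: b)).sum := by
  show ((((masks m).flatMap fun b => [true :: b, false :: b]).map f)).sum = _
  rw [List.flatMap, List.map_flatten, List.map_map, List.sum_flatten, List.map_map]
  rw [show ((List.sum ∘ List.map f ∘ fun b => [true :: b, false :: b]))
      = fun b => f (true :: b) + (f (false :: b) + 0) from rfl]
  rw [list_sum_map_add (masks m) (fun b => f (true :: b)) (fun b => f (false :: b) + 0)]
  simp [list_sum_map_add]

theorem eq_replicate_false {m : ℕ} {b : List Bool} (hb : b ∈ masks m)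
    (h : b.count true = 0) : b = List.replicate m false := by
  rw [List.eq_replicate_iff]
  refine ⟨length_mem_masks b hb, fun x hx => ?_⟩
  rcases x with _ | _
  · rfl
  · exact absurd (List.count_pos_iff.2 hx) (by omega)

theorem sum_masks_rep (g : List Bool → ℝ) :
    ∀ m : ℕ, (∀ b ∈ masks m, b ≠ List.replicate m false → g b = 0) →
      ((masks m).map g).sum = g (List.replicate m false)
  | 0, h => by simp [masks]
  | m + 1, h => by
    rw [masks_sum_split]
    have h1 : ((masks m).map fun b => g (true :: b)).sum = 0 :=
      List.sum_eq_zero fun r hr => by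
        simp only [List.mem_map] at hr
        obtain ⟨c, hc, rfl⟩ := hr
        exact h _ (mem_masks_cons hc true) (by simp [List.replicate_succ])
    have h2 : ((masks m).map fun b => g (false :: b)).sum = g (List.replicate (m+1) false) := by
      rw [List.replicate_succ]
      exact sum_masks_rep (fun b => g (false :: b)) m fun b hb hne =>
        h _ (mem_masks_cons hb false) (by simp [List.replicate_succ, hne])
    rw [h1, h2, zero_add]

theorem sum_masks_one (f : List Bool → ℝ) :
    ∀ m : ℕ, (∀ b ∈ masks m, b.count true ≠ 1 → f b = 0) →
      ((masks m).map f).sum = ((List.range m).map fun t => f (oneHot m t)).sum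
  | 0, h => by
    simp only [List.range_zero, List.map_nil, List.sum_nil, masks]
    simp [h [] (by simp [masks]) (by simp)]
  | m + 1, h => by
    rw [masks_sum_split]
    have h1 : ((masks m).map fun b => f (true :: b)).sum = f (oneHot (m + 1) 0) := by
      rw [show oneHot (m+1) 0 = true :: List.replicate m false from rfl]
      refine sum_masks_rep (fun b => f (true :: b)) m fun b hb hne => ?_
      by_cases hc : b.count true = 0
      · exact absurd (eq_replicate_false hb hc) hne
      · exact h _ (mem_masks_cons hb true) (by simp [List.count_cons]; omega)
    have h2 : ((masks m).map fun b => f (false :: b)).sum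
        = ((List.range m).map fun t => f (oneHot (m + 1) (t + 1))).sum := by
      rw [show (fun t => f (oneHot (m+1) (t+1))) = fun t => f (false :: oneHot m t) from rfl]
      exact sum_masks_one (fun b => f (false :: b)) m fun b hb hc =>
        h _ (mem_masks_cons hb false) (by simpa [List.count_cons] using hc)
    rw [h1, h2, List.range_succ_eq_map, List.map_cons, List.sum_cons, List.map_map]
    rfl

theorem sel_replicate {γ : Type*} :
    ∀ (I : List γ) , sel I (List.replicate I.length false) true = []
      ∧ sel I (List.replicate I.length false) false = I
  | [] => by simp [sel]
  | i :: I => by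
    have := sel_replicate I
    simp only [List.length_cons, List.replicate_succ, sel]
    simp [this.1, this.2]

theorem sel_oneHot {γ : Type*} (d : γ) :
    ∀ (I : List γ) (t : ℕ), t < I.length →
      sel I (oneHot I.length t) true = [I.getD t d]
        ∧ sel I (oneHot I.length t) false = I.eraseIdx t
  | [], t, ht => by simp at ht
  | i :: I, 0, ht => by
    simp only [List.length_cons, oneHot, sel, if_pos rfl]
    have := sel_replicate I
    simp [this.1, this.2, List.getD]
  | i :: I, t + 1, ht => by
    have hlt : t < I.length := by simpa using ht
    have := sel_oneHot d I t hlt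
    simp only [List.length_cons, oneHot, sel]
    simp [this.1, this.2, List.eraseIdx, List.getD]

theorem countFn_cons (i : Fin n) (I : List (Fin n)) :
    countFn (i :: I) = fun j => countFn I j + eIdx i j := by
  funext j
  simp only [countFn, List.count_cons, eIdx, beq_iff_eq]
  by_cases h : i = j
  · subst h; simp
  · simp [h, Ne.symm h]

theorem countFn_eraseIdx (d : Fin n) :
    ∀ (I : List (Fin n)) (t : ℕ), t < I.length →
      countFn I = fun j => countFn (I.eraseIdx t) j + eIdx (I.getD t d) j
  | [], t, ht => by simp at ht
  | i :: I, 0, ht => by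
    simpa [List.eraseIdx, List.getD] using countFn_cons i I
  | i :: I, t + 1, ht => by
    have hlt : t < I.length := by simpa using ht
    have ih := countFn_eraseIdx d I t hlt
    show countFn (i :: I) = fun j => countFn (i :: I.eraseIdx t) j + eIdx (I.getD t d) j
    rw [countFn_cons i I, countFn_cons i (I.eraseIdx t), ih]
    funext j
    ring

theorem sum_getD_count (j : Fin n) (c' : ℝ) :
    ∀ I : List (Fin n),
      ((List.range I.length).map fun t => if I.getD t j = j then c' else 0).sum
        = (I.count j : ℝ) * c'
  | [] => by simp
  | i :: I => by
    rw [show (i :: I).length = I.length + 1 from rfl, List.range_succ_eq_map,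
      List.map_cons, List.sum_cons, List.map_map]
    have : ((List.range I.length).map ((fun t => if (i :: I).getD t j = j then c' else 0)
        ∘ Nat.succ)).sum = ((List.range I.length).map fun t => if I.getD t j = j then c' else 0).sum := by
      congr 1
    rw [this, sum_getD_count j c' I]
    by_cases h : i = j
    · subst h
      simp [List.getD, List.count_cons]
      push_cast
      ring
    · simp [List.getD, List.count_cons, h, Ne.symm h]

theorem vfSeq_single_coord {X : Fin n → (Fin n → ℝ) → (Fin n → ℝ)}
    (hX0 : ∀ j, X j 0 = Pi.single j 1) (j i₀ : Fin n) :
    vfSeq X [j] (fun y : Fin n → ℝ => y i₀) 0 = if j = i₀ then (1:ℝ) else 0 := by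
  show vf (X j) (fun y : Fin n → ℝ => y i₀) 0 = _
  unfold vf
  rw [show (fun y : Fin n → ℝ => y i₀)
      = ⇑(ContinuousLinearMap.proj (R := ℝ) (φ := fun _ : Fin n => ℝ) i₀) from rfl,
    ContinuousLinearMap.fderiv, hX0 j]
  rw [ContinuousLinearMap.proj_apply, Pi.single_apply]
  by_cases h : j = i₀
  · simp [h]
  · rw [if_neg h, if_neg (fun hh : i₀ = j => h hh.symm)]

theorem sum_positions (I : List (Fin n)) (i₀ : Fin n) (α : Fin n → ℕ) (hα : 1 ≤ α i₀) (c' : ℝ) :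
    ((List.range I.length).map fun t =>
      (if I.getD t i₀ = i₀ then (1:ℝ) else 0)
        * (if countFn (I.eraseIdx t) = decIdx α i₀ then c' else 0)).sum
    = if countFn I = α then (α i₀ : ℝ) * c' else 0 := by
  by_cases hI : countFn I = α
  · rw [if_pos hI]
    have hcong : ∀ t ∈ List.range I.length,
        (if I.getD t i₀ = i₀ then (1:ℝ) else 0)
          * (if countFn (I.eraseIdx t) = decIdx α i₀ then c' else 0)
        = if I.getD t i₀ = i₀ then c' else 0 := by
      intro t ht
      rw [List.mem_range] at ht
      by_cases hg : I.getD t i₀ = i₀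
      · have hce := countFn_eraseIdx i₀ I t ht
        have : countFn (I.eraseIdx t) = decIdx α i₀ := by
          funext j
          have h1 : countFn I j = countFn (I.eraseIdx t) j + eIdx (I.getD t i₀) j :=
            congrFun hce j
          have h2 : decIdx α i₀ j + eIdx i₀ j = α j := congrFun (decIdx_add hα) j
          rw [hg] at h1
          have h3 : countFn I j = α j := congrFun hI j
          omega
        rw [if_pos hg, if_pos this, one_mul, if_pos hg]
      · rw [if_neg hg, zero_mul, if_neg hg]
    rw [List.map_congr_left hcong, sum_getD_count i₀ c' I]
    have : I.count i₀ = α i₀ := congrFun hI i₀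
    rw [this]
  · rw [if_neg hI]
    apply List.sum_eq_zero
    intro r hr
    simp only [List.mem_map, List.mem_range] at hr
    obtain ⟨t, ht, rfl⟩ := hr
    by_cases hg : I.getD t i₀ = i₀
    · by_cases hcf : countFn (I.eraseIdx t) = decIdx α i₀
      · exfalso
        apply hI
        funext j
        have h1 := congrFun (countFn_eraseIdx i₀ I t ht) j
        have h2 := congrFun (decIdx_add hα) j
        rw [hg] at h1
        rw [h1, congrFun hcf j]
        omega
      · rw [if_neg hcf, mul_zero]
    · rw [if_neg hg, zero_mul]

theorem fact_decIdx {α : Fin n → ℕ} {i₀ : Fin n} (h : 1 ≤ α i₀) :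
    α i₀ * ∏ i, (decIdx α i₀ i).factorial = ∏ i, (α i).factorial := by
  rw [← Finset.mul_prod_erase _ (fun i => (decIdx α i₀ i).factorial) (Finset.mem_univ i₀),
    ← Finset.mul_prod_erase _ (fun i => (α i).factorial) (Finset.mem_univ i₀), ← mul_assoc]
  congr 1
  · show α i₀ * (Function.update α i₀ (α i₀ - 1) i₀).factorial = _
    rw [Function.update_self]
    exact Nat.mul_factorial_pred (by omega)
  · exact Finset.prod_congr rfl fun i hi => by
      show (Function.update α i₀ (α i₀ - 1) i).factorial = _
      rw [Function.update_of_ne (Finset.ne_of_mem_erase hi)]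

/-- The diagonal lemma: for `|I| = |α|`, `X_I x^α (0) = α!` if `I` matches `α`, else `0`. -/
theorem vfSeq_monom_diag {V : Set (Fin n → ℝ)} {X : Fin n → (Fin n → ℝ) → (Fin n → ℝ)}
    (hV : IsOpen V) (h0 : (0 : Fin n → ℝ) ∈ V) (hX : ∀ i, SmOnV V (X i))
    (hX0 : ∀ j, X j 0 = Pi.single j 1) :
    ∀ (m : ℕ) (I : List (Fin n)) (α : Fin n → ℕ), I.length = m → mlen α = m →
      vfSeq X I (monom α) 0
        = if countFn I = α then ((∏ i, (α i).factorial : ℕ) : ℝ) else 0 := by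
  intro m
  induction m with
  | zero =>
    intro I α hI hα
    rw [List.length_eq_zero_iff] at hI
    subst hI
    have hα0 : α = fun _ => 0 := by
      funext i
      have := apply_le_mlen α i
      omega
    subst hα0
    rw [if_pos (by funext j; simp [countFn])]
    simp [vfSeq, monom]
  | succ m ih =>
    intro I α hI hα
    obtain ⟨i₀, hi₀⟩ := mlen_pos_exists (α := α) (by omega)
    set α' := decIdx α i₀ with hα'
    have hmα' : mlen α' = m := by
      have := mlen_decIdx (α := α) hi₀
      rw [← hα'] at this
      omega
    set c' : ℝ := ((∏ i, (α' i).factorial : ℕ) : ℝ) with hc'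
    rw [monom_split hi₀]
    rw [vfSeq_mul hV hX (fun x hx => (Van.coord (V := V) (X := X) i₀).1 x hx)
      (smOn_monom α') I 0 h0]
    rw [sum_masks_one _ I.length ?vanish]
    case vanish =>
      intro b hb hcb
      have hblen := length_mem_masks b hb
      have hbI : b.length = I.length := by omega
      have hselt := sel_count I b true hbI
      have hadd := sel_length_add I b hbI
      by_cases hc0 : b.count true = 0
      · have : sel I b true = [] := List.length_eq_zero_iff.1 (by omega)
        rw [this]
        show (0:Fin n → ℝ) i₀ * _ = 0
        simp
      · have h2 : (sel I b false).length < m := by omega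
        rw [(Van.monomOrd hV h0 hX m α' hmα').2 _ h2, mul_zero]
    have hterm : ∀ t ∈ List.range I.length,
        vfSeq X (sel I (oneHot I.length t) true) (fun y : Fin n → ℝ => y i₀) 0
          * vfSeq X (sel I (oneHot I.length t) false) (monom α') 0
        = (if I.getD t i₀ = i₀ then (1:ℝ) else 0)
            * (if countFn (I.eraseIdx t) = α' then c' else 0) := by
      intro t ht
      rw [List.mem_range] at ht
      obtain ⟨hsel1, hsel2⟩ := sel_oneHot i₀ I t ht
      rw [hsel1, hsel2, vfSeq_single_coord hX0,
        ih (I.eraseIdx t) α' (by rw [List.length_eraseIdx]; simp only [if_pos ht]; omega) hmα']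
    rw [List.map_congr_left hterm, sum_positions I i₀ α hi₀ c']
    by_cases hcnt : countFn I = α
    · rw [if_pos hcnt, if_pos hcnt, hc', hα', ← fact_decIdx (α := α) hi₀]
      push_cast
      ring
    · rw [if_neg hcnt, if_neg hcnt]

/-! ### Inversions and the commutator -/

def invCnt : List (Fin n) → ℕ
  | [] => 0
  | i :: I => I.countP (fun j => decide (j < i)) + invCnt I

theorem invCnt_le_sq : ∀ I : List (Fin n), invCnt I ≤ I.length * I.length
  | [] => le_refl 0
  | i :: I => by
    have h1 := invCnt_le_sq I
    have h2 : I.countP (fun j => decide (j < i)) ≤ I.length := List.countP_le_length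
    simp only [invCnt, List.length_cons]
    nlinarith

theorem invCnt_swap : ∀ (A : List (Fin n)) {i j : Fin n} (B : List (Fin n)), j < i →
    invCnt (A ++ j :: i :: B) < invCnt (A ++ i :: j :: B)
  | [], i, j, B, hji => by
    simp only [List.nil_append, invCnt, List.countP_cons]
    have : ¬ (i < j) := by omega
    simp [hji, this]
    omega
  | a :: A, i, j, B, hji => by
    simp only [List.cons_append, invCnt, List.append_eq]
    have hperm : (A ++ j :: i :: B).Perm (A ++ i :: j :: B) :=
      List.Perm.append_left A (List.Perm.swap i j B)
    rw [hperm.countP_eq]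
    have := invCnt_swap A B hji
    omega

theorem descent_or_sorted : ∀ I : List (Fin n),
    List.Pairwise (· ≤ ·) I ∨ ∃ (A : List (Fin n)) (i j : Fin n) (B : List (Fin n)),
      j < i ∧ I = A ++ i :: j :: B
  | [] => Or.inl (List.Pairwise.nil)
  | [i] => Or.inl (List.pairwise_singleton _ i)
  | a :: b :: I => by
    rcases descent_or_sorted (b :: I) with hs | ⟨A, i, j, B, hji, hEq⟩
    · by_cases hab : a ≤ b
      · left
        rw [List.pairwise_cons]
        refine ⟨fun c hc => ?_, hs⟩
        rcases List.mem_cons.1 hc with rfl | hc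
        · exact hab
        · exact le_trans hab (List.rel_of_pairwise_cons hs hc)
      · right
        exact ⟨[], a, b, I, by omega, rfl⟩
    · right
      exact ⟨a :: A, i, j, B, hji, by simp [hEq]⟩

theorem vfSeq_zero_onV {V : Set (Fin n → ℝ)} {X : Fin n → (Fin n → ℝ) → (Fin n → ℝ)}
    (hV : IsOpen V) {f : (Fin n → ℝ) → ℝ} (hf : ∀ x ∈ V, f x = 0) :
    ∀ (I : List (Fin n)), ∀ x ∈ V, vfSeq X I f x = 0
  | [], x, hx => hf x hx
  | i :: I, x, hx => by
    have h : vfSeq X I f =ᶠ[𝓝 x] fun _ => (0:ℝ) :=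
      Filter.eventuallyEq_of_mem (hV.mem_nhds hx) (vfSeq_zero_onV hV hf I)
    show vf (X i) (vfSeq X I f) x = 0
    unfold vf
    rw [h.fderiv_eq]
    simp [fderiv_const]

theorem vf_comm {V : Set (Fin n → ℝ)} {X Y : (Fin n → ℝ) → (Fin n → ℝ)}
    (hV : IsOpen V) (hXs : SmOnV V X) (hYs : SmOnV V Y)
    {g : (Fin n → ℝ) → ℝ} (hg : SmOn V g) {x : Fin n → ℝ} (hx : x ∈ V) :
    vf X (vf Y g) x = vf Y (vf X g) x + fderiv ℝ g x (lieBk X Y x) := by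
  have hgx := hg x hx
  have hF : ContDiffAt ℝ (⊤ : ℕ∞) (fderiv ℝ g) x := hgx.fderiv_right (m := (⊤ : ℕ∞)) (by simp)
  have hFd : DifferentiableAt ℝ (fderiv ℝ g) x := hF.differentiableAt (by simp)
  have hXd : DifferentiableAt ℝ X x := (hXs x hx).differentiableAt (by simp)
  have hYd : DifferentiableAt ℝ Y x := (hYs x hx).differentiableAt (by simp)
  have hev : ∀ᶠ y in 𝓝 x, HasFDerivAt g (fderiv ℝ g y) y := by
    filter_upwards [hV.mem_nhds hx] with y hy
    exact (hg.diffAt hy).hasFDerivAt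
  have hsymm := second_derivative_symmetric_of_eventually hev hFd.hasFDerivAt (X x) (Y x)
  have e1 : vf X (vf Y g) x
      = fderiv ℝ g x (fderiv ℝ Y x (X x)) + (fderiv ℝ (fderiv ℝ g) x (X x)) (Y x) := by
    show fderiv ℝ (fun y => (fderiv ℝ g y) (Y y)) x (X x) = _
    rw [fderiv_clm_apply hFd hYd]
    simp
  have e2 : vf Y (vf X g) x
      = fderiv ℝ g x (fderiv ℝ X x (Y x)) + (fderiv ℝ (fderiv ℝ g) x (Y x)) (X x) := by
    show fderiv ℝ (fun y => (fderiv ℝ g y) (X y)) x (Y x) = _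
    rw [fderiv_clm_apply hFd hXd]
    simp
  rw [e1, e2]
  unfold lieBk
  rw [map_sub]
  rw [hsymm]
  ring

/-! ### The expansion of `X_I` in terms of `X^α` -/

theorem seqW_cons (w : Fin n → ℕ) (i : Fin n) (I : List (Fin n)) :
    seqW w (i :: I) = w i + seqW w I := by simp [seqW]

theorem seqW_append (w : Fin n → ℕ) (A B : List (Fin n)) :
    seqW w (A ++ B) = seqW w A + seqW w B := by simp [seqW]

theorem seqW_sublist (w : Fin n → ℕ) {J I : List (Fin n)} (h : J.Sublist I) :
    seqW w J ≤ seqW w I := by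
  induction h with
  | slnil => exact le_refl 0
  | cons a h ih => rw [seqW_cons]; omega
  | cons_cons a h ih => rw [seqW_cons, seqW_cons]; omega

theorem list_mul_sum {γ : Type*} (r : ℝ) : ∀ (l : List γ) (F : γ → ℝ),
    r * (l.map F).sum = (l.map fun b => r * F b).sum
  | [], F => by simp
  | b :: l, F => by
    simp only [List.map_cons, List.sum_cons, mul_add, list_mul_sum r l F]

theorem sum_map_flatMap {γ δ : Type*} (l : List γ) (g : γ → List δ) (F : δ → ℝ) :
    ((l.flatMap g).map F).sum = (l.map fun a => ((g a).map F).sum).sum := by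
  rw [List.flatMap, List.map_flatten, List.sum_flatten, List.map_map, List.map_map]
  rfl

theorem smOn_finset_sum {V : Set (Fin n → ℝ)} {γ : Type*} (s : Finset γ)
    (F : γ → (Fin n → ℝ) → ℝ) (hF : ∀ a ∈ s, SmOn V (F a)) :
    SmOn V (fun y => ∑ a ∈ s, F a y) :=
  fun x hx => ContDiffAt.sum fun a ha => hF a ha x hx

theorem finset_sum_toList {γ : Type*} (s : Finset γ) (f : γ → ℝ) :
    (s.toList.map f).sum = ∑ a ∈ s, f a := by
  rw [← Multiset.sum_coe, ← Multiset.map_coe, Finset.coe_toList]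
  rfl

section Expansion

variable {V : Set (Fin n → ℝ)} {X : Fin n → (Fin n → ℝ) → (Fin n → ℝ)}
  {w : Fin n → ℕ} {L : Fin n → Fin n → Fin n → (Fin n → ℝ) → ℝ}

/-- The conclusion of the expansion lemma for the word `I`. -/
def Expands (V : Set (Fin n → ℝ)) (X : Fin n → (Fin n → ℝ) → (Fin n → ℝ))
    (w : Fin n → ℕ) (I : List (Fin n)) : Prop :=
  ∃ T : List ((Fin n → ℕ) × ((Fin n → ℝ) → ℝ)),
    (∀ p ∈ T, wlen w p.1 ≤ seqW w I ∧ SmOn V p.2) ∧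
    ∀ f, SmOn V f → ∀ x ∈ V,
      vfSeq X I f x = (T.map fun p => p.2 x * vfSeq X (multiList p.1) f x).sum

theorem expands_sorted {I : List (Fin n)} (hs : List.Pairwise (· ≤ ·) I) :
    Expands V X w I := by
  refine ⟨[(countFn I, fun _ => (1:ℝ))], ?_, ?_⟩
  · intro p hp
    rw [List.mem_singleton] at hp
    subst hp
    exact ⟨le_of_eq (wlen_countFn w I), smOn_const 1⟩
  · intro f hf x hx
    rw [List.map_singleton, List.sum_cons, List.sum_nil]
    rw [multiList_countFn_of_sorted hs]
    ring

theorem expansion (hV : IsOpen V) (hX : ∀ i, SmOnV V (X i))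
    (hLs : ∀ i j k, SmOn V (L i j k))
    (hLz : ∀ i j k, ¬ w k ≤ w i + w j → ∀ x ∈ V, L i j k x = 0)
    (hbr : ∀ i j, ∀ x ∈ V, lieBk (X i) (X j) x = ∑ k, L i j k x • X k x) :
    ∀ (N : ℕ) (I : List (Fin n)),
      I.length * I.length * I.length + invCnt I ≤ N → Expands V X w I := by
  intro N
  induction N with
  | zero =>
    intro I hI
    have : I.length = 0 := by nlinarith [invCnt_le_sq I]
    rw [List.length_eq_zero_iff] at this
    subst this
    exact expands_sorted List.Pairwise.nil
  | succ N ihN =>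
    intro I hμ
    rcases descent_or_sorted I with hs | ⟨A, i, j, B, hji, rfl⟩
    · exact expands_sorted hs
    · -- the descent case
      classical
      set ℓ := (A ++ i :: j :: B).length with hℓ
      have hℓ2 : 2 ≤ ℓ := by simp [hℓ]; omega
      have hℓA : ℓ = A.length + B.length + 2 := by simp [hℓ]; omega
      -- the swapped word
      set I' := A ++ j :: i :: B with hI'
      have hpermI : (A ++ j :: i :: B).Perm (A ++ i :: j :: B) :=
        List.Perm.append_left A (List.Perm.swap i j B)
      have hlenI' : I'.length = ℓ := by rw [hI', hℓ]; exact hpermI.length_eq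
      have hseqI' : seqW w I' = seqW w (A ++ i :: j :: B) := (hpermI.map w).sum_eq
      have hinv : invCnt I' < invCnt (A ++ i :: j :: B) := invCnt_swap A B hji
      obtain ⟨T1, hT1w, hT1⟩ : Expands V X w I' := by
        refine ihN I' ?_
        rw [hlenI']
        exact Nat.lt_succ_iff.1 (lt_of_lt_of_le (Nat.add_lt_add_left hinv _) hμ)
      -- subword expansions
      have hsub : ∀ (k : Fin n) (b : List Bool), ∃ T :
          List ((Fin n → ℕ) × ((Fin n → ℝ) → ℝ)),
          w k ≤ w i + w j → b ∈ masks A.length →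
          ((∀ p ∈ T, wlen w p.1 ≤ seqW w (sel A b false ++ k :: B) ∧ SmOn V p.2) ∧
            ∀ f, SmOn V f → ∀ x ∈ V, vfSeq X (sel A b false ++ k :: B) f x
              = (T.map fun p => p.2 x * vfSeq X (multiList p.1) f x).sum) := by
        intro k b
        by_cases hkb : w k ≤ w i + w j ∧ b ∈ masks A.length
        · have hlenW : (sel A b false ++ k :: B).length ≤ ℓ - 1 := by
            have h1 : (sel A b false).length ≤ A.length := (sel_sublist A b false).length_le
            simp only [List.length_append, List.length_cons]
            omega
          obtain ⟨T, h1, h2⟩ : Expands V X w (sel A b false ++ k :: B) := by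
            refine ihN _ ?_
            obtain ⟨m', hm'⟩ : ∃ m', ℓ = m' + 1 := ⟨ℓ - 1, by omega⟩
            have h2 := invCnt_le_sq (sel A b false ++ k :: B)
            set m := (sel A b false ++ k :: B).length with hmdef
            have hm : m ≤ m' := by omega
            have hlt : m * m * m + invCnt (sel A b false ++ k :: B) < ℓ * ℓ * ℓ := by
              rw [hm']
              have e1 : m * m * m ≤ m' * m' * m' :=
                Nat.mul_le_mul (Nat.mul_le_mul hm hm) hm
              have e2 : m * m ≤ m' * m' := Nat.mul_le_mul hm hm
              nlinarith
            have hle : ℓ * ℓ * ℓ ≤ N + 1 := le_trans (Nat.le_add_right _ _) hμ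
            exact Nat.lt_succ_iff.1 (lt_of_lt_of_le hlt hle)
          exact ⟨T, fun _ _ => ⟨h1, h2⟩⟩
        · exact ⟨[], fun h1 h2 => absurd ⟨h1, h2⟩ hkb⟩
      set Φ : Fin n → List Bool → List ((Fin n → ℕ) × ((Fin n → ℝ) → ℝ)) :=
        fun k b => Classical.choose (hsub k b) with hΦdef
      have hΦ := fun k b => Classical.choose_spec (hsub k b)
      set ks : Finset (Fin n) := Finset.univ.filter (fun k => w k ≤ w i + w j) with hks
      set T2 : List ((Fin n → ℕ) × ((Fin n → ℝ) → ℝ)) :=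
        ks.toList.flatMap (fun k => (masks A.length).flatMap fun b =>
          (Φ k b).map fun p =>
            (p.1, fun y => vfSeq X (sel A b true) (L i j k) y * p.2 y)) with hT2
      refine ⟨T1 ++ T2, ?_, ?_⟩
      · intro p hp
        rw [List.mem_append] at hp
        rcases hp with hp | hp
        · obtain ⟨h1, h2⟩ := hT1w p hp
          rw [hseqI'] at h1
          exact ⟨h1, h2⟩
        · rw [hT2] at hp
          rw [List.mem_flatMap] at hp
          obtain ⟨k, hk, hp⟩ := hp
          rw [List.mem_flatMap] at hp
          obtain ⟨b, hb, hp⟩ := hp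
          rw [List.mem_map] at hp
          obtain ⟨q, hq, rfl⟩ := hp
          have hkk : w k ≤ w i + w j := by
            rw [Finset.mem_toList, hks, Finset.mem_filter] at hk
            exact hk.2
          obtain ⟨hw1, hw2⟩ := (hΦ k b hkk hb).1 q hq
          constructor
          · refine le_trans hw1 ?_
            rw [seqW_append, seqW_cons, seqW_append, seqW_cons, seqW_cons]
            have := seqW_sublist w (sel_sublist A b false)
            omega
          · exact ((hLs i j k).vfSeq hX _).mul hw2
      · intro f hf x hx
        -- the pointwise identity
        have hg : SmOn V (vfSeq X B f) := hf.vfSeq hX B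
        have hcomm : ∀ y ∈ V, vfSeq X (i :: j :: B) f y
            = vfSeq X (j :: i :: B) f y
              + ∑ k, L i j k y * vfSeq X (k :: B) f y := by
          intro y hy
          show vf (X i) (vf (X j) (vfSeq X B f)) y = _
          rw [vf_comm hV (hX i) (hX j) hg hy, hbr i j y hy, map_sum]
          congr 1
          apply Finset.sum_congr rfl
          intro k _
          rw [ContinuousLinearMap.map_smul]
          rfl
        have hSm1 : SmOn V (vfSeq X (j :: i :: B) f) := hf.vfSeq hX _
        have hSm2 : SmOn V (fun y => ∑ k, L i j k y * vfSeq X (k :: B) f y) :=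
          smOn_finset_sum _ _ fun k _ => (hLs i j k).mul (hf.vfSeq hX _)
        have step1 : vfSeq X (A ++ i :: j :: B) f x
            = vfSeq X I' f x + ∑ k, vfSeq X A
                (fun y => L i j k y * vfSeq X (k :: B) f y) x := by
          rw [vfSeq_append A (i :: j :: B) f,
            vfSeq_congr hV hcomm A x hx,
            vfSeq_add hV hX hSm1 hSm2 A x hx,
            vfSeq_finset_sum hV hX Finset.univ _ (fun k _ => (hLs i j k).mul (hf.vfSeq hX _)) A x hx]
          rw [hI', vfSeq_append]
        -- kill the terms with too large weight
        have step2 : ∑ k, vfSeq X A (fun y => L i j k y * vfSeq X (k :: B) f y) x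
            = ∑ k ∈ ks, vfSeq X A (fun y => L i j k y * vfSeq X (k :: B) f y) x := by
          symm
          apply Finset.sum_subset (Finset.subset_univ _)
          intro k _ hk
          rw [hks, Finset.mem_filter] at hk
          push_neg at hk
          have hk' := hk (Finset.mem_univ k)
          apply vfSeq_zero_onV hV (f := fun y => L i j k y * vfSeq X (k :: B) f y) ?_ A x hx
          intro y hy
          show L i j k y * vfSeq X (k :: B) f y = 0
          rw [hLz i j k (not_le.mpr hk') y hy, zero_mul]
        -- expand each term by the Leibniz rule and the subword expansions
        have step3 : ∀ k ∈ ks, vfSeq X A (fun y => L i j k y * vfSeq X (k :: B) f y) x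
            = ((masks A.length).map fun b =>
                (((Φ k b).map fun p => (vfSeq X (sel A b true) (L i j k) x * p.2 x)
                  * vfSeq X (multiList p.1) f x).sum)).sum := by
          intro k hk
          have hkk : w k ≤ w i + w j := by
            rw [hks, Finset.mem_filter] at hk
            exact hk.2
          rw [vfSeq_mul hV hX (hLs i j k) (hf.vfSeq hX _) A x hx]
          congr 1
          apply List.map_congr_left
          intro b hb
          rw [← vfSeq_append, (hΦ k b hkk hb).2 f hf x hx, list_mul_sum]
          congr 1
          apply List.map_congr_left
          intro p _
          ring
        -- assemble everything
        rw [List.map_append, List.sum_append, step1, hT1 f hf x hx, step2,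
          Finset.sum_congr rfl step3]
        congr 1
        rw [hT2, sum_map_flatMap, ← finset_sum_toList]
        congr 1
        apply List.map_congr_left
        intro k hk
        rw [sum_map_flatMap]
        congr 1
        apply List.map_congr_left
        intro b hb
        rw [List.map_map]
        rfl
end Expansion

/-! ### Orders -/

section Order

variable {V : Set (Fin n → ℝ)} {X : Fin n → (Fin n → ℝ) → (Fin n → ℝ)}
  {w : Fin n → ℕ} {L : Fin n → Fin n → Fin n → (Fin n → ℝ) → ℝ}

theorem orderGe_iff (hV : IsOpen V) (h0 : (0 : Fin n → ℝ) ∈ V) (hX : ∀ i, SmOnV V (X i))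
    (hLs : ∀ i j k, SmOn V (L i j k))
    (hLz : ∀ i j k, ¬ w k ≤ w i + w j → ∀ x ∈ V, L i j k x = 0)
    (hbr : ∀ i j, ∀ x ∈ V, lieBk (X i) (X j) x = ∑ k, L i j k x • X k x)
    {f : (Fin n → ℝ) → ℝ} (hf : SmOn V f) (N : ℕ) :
    OrderGe w X f 0 N ↔
      ∀ β : Fin n → ℕ, wlen w β < N → vfSeq X (multiList β) f 0 = 0 := by
  constructor
  · intro h β hβ
    exact h (multiList β) (by rw [seqW_multiList]; exact hβ)
  · intro h I hI
    obtain ⟨T, hTw, hT⟩ : Expands V X w I :=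
      expansion hV hX hLs hLz hbr
        (I.length * I.length * I.length + invCnt I) I (le_refl _)
    rw [hT f hf 0 h0]
    apply List.sum_eq_zero
    intro r hr
    rw [List.mem_map] at hr
    obtain ⟨p, hp, rfl⟩ := hr
    rw [h p.1 (lt_of_le_of_lt (hTw p hp).1 hI), mul_zero]

/-- The polynomial candidate function. -/
def psiF {n : ℕ} (k : Fin n) (c : (Fin n → ℕ) →₀ ℝ) : (Fin n → ℝ) → ℝ :=
  fun x => x k + c.sum fun α cα => cα * monom α x

theorem contDiff_monom (α : Fin n → ℕ) : ContDiff ℝ (⊤ : ℕ∞) (monom α) := by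
  unfold monom
  have : ∀ s : Finset (Fin n), ContDiff ℝ (⊤ : ℕ∞) (fun x : Fin n → ℝ => ∏ i ∈ s, x i ^ α i) := by
    intro s
    induction s using Finset.induction with
    | empty => simpa using contDiff_const
    | @insert a s ha ih =>
      have : (fun x : Fin n → ℝ => ∏ i ∈ insert a s, x i ^ α i)
          = fun x => x a ^ α a * ∏ i ∈ s, x i ^ α i := by
        funext x; rw [Finset.prod_insert ha]
      rw [this]
      exact (((ContinuousLinearMap.proj (R := ℝ) (φ := fun _ : Fin n => ℝ)
        a).contDiff).pow _).mul ih
  exact this Finset.univ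

theorem smOn_coord (k : Fin n) : SmOn V (fun x : Fin n → ℝ => x k) := fun x _ =>
  (ContinuousLinearMap.proj (R := ℝ) (φ := fun _ : Fin n => ℝ) k).contDiff.contDiffAt

theorem smOn_psiF (k : Fin n) (c : (Fin n → ℕ) →₀ ℝ) : SmOn V (psiF k c) := by
  intro x hx
  apply ContDiffAt.add
  · exact smOn_coord k x hx
  · exact ContDiffAt.sum fun α _ =>
      (contDiffAt_const).mul (contDiff_monom α).contDiffAt

theorem monom_zero_eq_zero {α : Fin n → ℕ} (h : 1 ≤ mlen α) : monom α (0 : Fin n → ℝ) = 0 := by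
  obtain ⟨i₀, hi₀⟩ := mlen_pos_exists (α := α) (by omega)
  exact Finset.prod_eq_zero (Finset.mem_univ i₀) (by simp; omega)

/-- Linear expansion of `X_J ψ_c (0)`. -/
theorem vfSeq_psiF (hV : IsOpen V) (h0 : (0 : Fin n → ℝ) ∈ V) (hX : ∀ i, SmOnV V (X i))
    (k : Fin n) (c : (Fin n → ℕ) →₀ ℝ) (J : List (Fin n)) :
    vfSeq X J (psiF k c) 0 = vfSeq X J (fun x => x k) 0
      + ∑ α ∈ c.support, c α * vfSeq X J (monom α) 0 := by
  rw [show psiF k c = fun x => (fun x : Fin n → ℝ => x k) x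
      + (fun x => ∑ α ∈ c.support, c α * monom α x) x from rfl]
  rw [vfSeq_add hV hX (smOn_coord k)
    (smOn_finset_sum _ _ fun α _ => (smOn_monom α).const_mul (c α)) J 0 h0]
  congr 1
  rw [vfSeq_finset_sum hV hX c.support (fun α x => c α * monom α x)
    (fun α _ => (smOn_monom α).const_mul (c α)) J 0 h0]
  exact Finset.sum_congr rfl fun α _ =>
    vfSeq_const_mul hV hX (smOn_monom α) (c α) J 0 h0

end Order

/-! ### The linear system -/

section System

variable {V : Set (Fin n → ℝ)} {X : Fin n → (Fin n → ℝ) → (Fin n → ℝ)}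
  {w : Fin n → ℕ} {L : Fin n → Fin n → Fin n → (Fin n → ℝ) → ℝ}

/-- index set of the unknowns for the `k`-th coordinate. -/
def Sk {n : ℕ} (w : Fin n → ℕ) (k : Fin n) : Finset (Fin n → ℕ) :=
  (mIdx n (w k)).filter fun α => wlen w α < w k ∧ 2 ≤ mlen α

theorem mem_Sk (hw : ∀ i, 0 < w i) {k : Fin n} {α : Fin n → ℕ} :
    α ∈ Sk w k ↔ wlen w α < w k ∧ 2 ≤ mlen α := by
  unfold Sk mIdx
  rw [Finset.mem_filter]
  constructor
  · exact And.right
  · intro h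
    refine ⟨?_, h⟩
    rw [Fintype.mem_piFinset]
    intro i
    rw [Finset.mem_range]
    have h1 : α i ≤ w i * α i := Nat.le_mul_of_pos_left _ (hw i)
    have h2 : w i * α i ≤ wlen w α :=
      Finset.single_le_sum (f := fun i => w i * α i) (fun _ _ => Nat.zero_le _)
        (Finset.mem_univ i)
    omega

theorem per_k (hV : IsOpen V) (h0 : (0 : Fin n → ℝ) ∈ V) (hX : ∀ i, SmOnV V (X i))
    (hX0 : ∀ j, X j 0 = Pi.single j 1)
    (hLs : ∀ i j k, SmOn V (L i j k))
    (hLz : ∀ i j k, ¬ w k ≤ w i + w j → ∀ x ∈ V, L i j k x = 0)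
    (hbr : ∀ i j, ∀ x ∈ V, lieBk (X i) (X j) x = ∑ k, L i j k x • X k x)
    (hw : ∀ i, 0 < w i) (k : Fin n) :
    ∃! c : (Fin n → ℕ) →₀ ℝ,
      (∀ α ∈ c.support, wlen w α < w k ∧ 2 ≤ mlen α) ∧
      OrderEq w X (psiF k c) 0 (w k) := by
  classical
  set S := Sk w k with hS
  set M : (Fin n → ℕ) → (Fin n → ℕ) → ℝ :=
    fun β α => vfSeq X (multiList β) (monom α) 0 with hM
  set bv : (Fin n → ℕ) → ℝ :=
    fun β => vfSeq X (multiList β) (fun x : Fin n → ℝ => x k) 0 with hbv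
  have hMlt : ∀ β α : Fin n → ℕ, mlen β < mlen α → M β α = 0 := fun β α h =>
    (Van.monomOrd hV h0 hX (mlen α) α rfl).2 _ (by rw [length_multiList]; exact h)
  have hMeq : ∀ β α : Fin n → ℕ, mlen β = mlen α →
      M β α = if β = α then ((∏ i, (α i).factorial : ℕ) : ℝ) else 0 := by
    intro β α h
    have hc : countFn (multiList β) = β := funext fun j => count_multiList β j
    rw [hM]
    show vfSeq X (multiList β) (monom α) 0 = _
    rw [vfSeq_monom_diag hV h0 hX hX0 (mlen α) (multiList β) α
      (by rw [length_multiList, h]) rfl, hc]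
  -- the key characterisation
  have hiff : ∀ c : (Fin n → ℕ) →₀ ℝ, (∀ α ∈ c.support, wlen w α < w k ∧ 2 ≤ mlen α) →
      (OrderEq w X (psiF k c) 0 (w k) ↔
        ∀ β ∈ S, bv β + ∑ α ∈ S, c α * M β α = 0) := by
    intro c hsupp
    have hsub : c.support ⊆ S := fun α hα => (mem_Sk hw).2 (hsupp α hα)
    have hexp : ∀ β : Fin n → ℕ,
        vfSeq X (multiList β) (psiF k c) 0 = bv β + ∑ α ∈ S, c α * M β α := by
      intro β
      rw [vfSeq_psiF hV h0 hX k c (multiList β)]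
      congr 1
      exact Finset.sum_subset hsub fun α _ hα => by
        rw [Finsupp.notMem_support_iff.1 hα, zero_mul]
    have hMS0 : ∀ (β : Fin n → ℕ), mlen β < 2 → ∀ α ∈ S, M β α = 0 := by
      intro β hβm α hα
      exact hMlt β α (by have := ((mem_Sk hw).1 hα).2; omega)
    have hlow : ∀ β : Fin n → ℕ, wlen w β < w k → mlen β < 2 →
        bv β + ∑ α ∈ S, c α * M β α = 0 := by
      intro β hβw hβm
      have hb0 : bv β = 0 := by
        have hβm' : mlen β = 0 ∨ mlen β = 1 := by omega
        rcases hβm' with h | h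
        · have hβ0 : β = fun _ => 0 := by
            funext i
            have := apply_le_mlen β i
            omega
          rw [hbv, hβ0]
          show vfSeq X (multiList fun _ => 0) (fun x : Fin n → ℝ => x k) 0 = 0
          rw [multiList_zero]
          show (0 : Fin n → ℝ) k = 0
          simp
        · obtain ⟨j, rfl⟩ := mlen_eq_one_iff h
          have hjk : j ≠ k := by
            intro hjk
            rw [wlen_eIdx, hjk] at hβw
            omega
          rw [hbv]
          show vfSeq X (multiList (eIdx j)) (fun x : Fin n → ℝ => x k) 0 = 0
          rw [multiList_eIdx, vfSeq_single_coord hX0, if_neg hjk]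
      rw [hb0, Finset.sum_eq_zero fun α hα => by rw [hMS0 β hβm α hα, mul_zero], add_zero]
    have hone : vfSeq X (multiList (eIdx k)) (psiF k c) 0 = 1 := by
      rw [hexp (eIdx k)]
      have hbk : bv (eIdx k) = 1 := by
        rw [hbv]
        show vfSeq X (multiList (eIdx k)) (fun x : Fin n → ℝ => x k) 0 = 1
        rw [multiList_eIdx, vfSeq_single_coord hX0, if_pos rfl]
      rw [hbk, Finset.sum_eq_zero fun α hα => by
        rw [hMS0 (eIdx k) (by rw [mlen_eIdx]; omega) α hα, mul_zero], add_zero]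
    constructor
    · rintro ⟨hge, -⟩
      intro β hβ
      rw [← hexp β]
      exact hge (multiList β) (by rw [seqW_multiList]; exact ((mem_Sk hw).1 hβ).1)
    · intro hsys
      constructor
      · rw [orderGe_iff hV h0 hX hLs hLz hbr (smOn_psiF k c) (w k)]
        intro β hβ
        rw [hexp β]
        by_cases h2 : 2 ≤ mlen β
        · exact hsys β ((mem_Sk hw).2 ⟨hβ, h2⟩)
        · exact hlow β hβ (by omega)
      · refine ⟨[k], by simp [seqW], ?_⟩
        rw [show [k] = multiList (eIdx k) from (multiList_eIdx k).symm, hone]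
        exact one_ne_zero
  -- the linear system has a unique solution
  let σ := {α // α ∈ S}
  let T : (σ → ℝ) →ₗ[ℝ] (σ → ℝ) :=
    Matrix.mulVecLin (fun β α : σ => M β.1 α.1)
  have hTapp : ∀ (v : σ → ℝ) (β : σ), T v β = ∑ α : σ, M β.1 α.1 * v α := by
    intro v β
    show Matrix.mulVec (fun β α : σ => M β.1 α.1) v β = _
    simp [T, Matrix.mulVecLin_apply, Matrix.mulVec, dotProduct]
  have hdiag : ∀ α : Fin n → ℕ, M α α ≠ 0 := by
    intro α
    rw [hMeq α α rfl, if_pos rfl]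
    have : 0 < ∏ i, (α i).factorial := Finset.prod_pos fun i _ => Nat.factorial_pos _
    exact Nat.cast_ne_zero.2 (by omega)
  have hinj : Function.Injective T := by
    suffices hker : ∀ v : σ → ℝ, T v = 0 → v = 0 by
      intro v1 v2 h12
      have := hker (v1 - v2) (by rw [map_sub, h12, sub_self])
      exact sub_eq_zero.1 this
    intro v hv
    by_contra hne
    have hex : ∃ α : σ, v α ≠ 0 := by
      by_contra hc
      push_neg at hc
      exact hne (funext hc)
    obtain ⟨α₁, hα₁⟩ := hex
    have hnonempty : (Finset.univ.filter fun α : σ => v α ≠ 0).Nonempty :=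
      ⟨α₁, by simp [hα₁]⟩
    obtain ⟨β₀, hβ₀s, hmin⟩ :=
      Finset.exists_min_image (Finset.univ.filter fun α : σ => v α ≠ 0)
        (fun α => mlen α.1) hnonempty
    have hvβ₀ : v β₀ ≠ 0 := (Finset.mem_filter.1 hβ₀s).2
    have hTv : T v β₀ = 0 := by rw [hv]; rfl
    rw [hTapp v β₀] at hTv
    rw [Finset.sum_eq_single β₀ ?off (by intro h; exact absurd (Finset.mem_univ β₀) h)] at hTv
    case off =>
      intro α _ hαβ
      by_cases hvα : v α = 0
      · rw [hvα, mul_zero]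
      · have hm : mlen β₀.1 ≤ mlen α.1 :=
          hmin α (Finset.mem_filter.2 ⟨Finset.mem_univ α, hvα⟩)
        rcases lt_or_eq_of_le hm with hm | hm
        · rw [hMlt _ _ hm, zero_mul]
        · rw [hMeq _ _ hm, if_neg (fun hh => hαβ (Subtype.ext hh.symm)), zero_mul]
    exact hvβ₀ ((mul_eq_zero.1 hTv).resolve_left (hdiag β₀.1))
  obtain ⟨sol, hsol⟩ : ∃ sol : σ → ℝ, T sol = fun β : σ => -bv β.1 :=
    (LinearMap.injective_iff_surjective.1 hinj) _
  -- package the solution as a finsupp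
  set c₀ : (Fin n → ℕ) →₀ ℝ := Finsupp.onFinset S
    (fun α => if h : α ∈ S then sol ⟨α, h⟩ else 0)
    (fun α hα => by by_contra h; simp [h] at hα) with hc₀
  have hc₀S : ∀ (α) (h : α ∈ S), c₀ α = sol ⟨α, h⟩ := by
    intro α h
    rw [hc₀]
    show (if h : α ∈ S then sol ⟨α, h⟩ else 0) = _
    rw [dif_pos h]
  have hc₀nS : ∀ α, α ∉ S → c₀ α = 0 := by
    intro α h
    rw [hc₀]
    show (if h : α ∈ S then sol ⟨α, h⟩ else 0) = _
    rw [dif_neg h]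
  have hsupp₀ : ∀ α ∈ c₀.support, wlen w α < w k ∧ 2 ≤ mlen α := by
    intro α hα
    have : α ∈ S := Finsupp.support_onFinset_subset hα
    exact (mem_Sk hw).1 this
  -- translate between the two forms of the system
  have htrans : ∀ c : (Fin n → ℕ) →₀ ℝ, (∀ (α) (h : α ∈ S), c α = sol ⟨α, h⟩) →
      ∀ β ∈ S, bv β + ∑ α ∈ S, c α * M β α = 0 := by
    intro c hcS β hβ
    have heq : ∑ α ∈ S, c α * M β α = ∑ α : σ, M β α.1 * sol α := by
      rw [← Finset.sum_attach S (fun α => c α * M β α), Finset.univ_eq_attach]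
      exact Finset.sum_congr rfl fun α _ => by rw [hcS α.1 α.2, mul_comm]
    have hT : ∑ α : σ, M β α.1 * sol α = - bv β := by
      have h3 := congrFun hsol ⟨β, hβ⟩
      rw [hTapp] at h3
      exact h3
    rw [heq, hT]
    ring
  have hsys₀ := htrans c₀ hc₀S
  refine ⟨c₀, ⟨hsupp₀, (hiff c₀ hsupp₀).2 hsys₀⟩, ?_⟩
  -- uniqueness
  rintro c' ⟨hsupp', hord'⟩
  have hsys' := (hiff c' hsupp').1 hord'
  set v' : σ → ℝ := fun α => c' α.1 with hv'
  have : T v' = T sol := by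
    funext β
    rw [hTapp]
    have h1 : ∑ α : σ, M β.1 α.1 * v' α = ∑ α ∈ S, c' α * M β.1 α := by
      rw [← Finset.sum_attach S (fun α => c' α * M β.1 α), Finset.univ_eq_attach]
      exact Finset.sum_congr rfl fun α _ => by rw [hv', mul_comm]
    have h2 := hsys' β.1 β.2
    have h3 : T sol β = - bv β.1 := congrFun hsol β
    rw [h1, h3]
    linarith
  have hveq : v' = sol := hinj this
  apply Finsupp.ext
  intro α
  by_cases hα : α ∈ S
  · rw [hc₀S α hα, ← congrFun hveq ⟨α, hα⟩]
  · rw [hc₀nS α hα]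
    by_contra hne
    exact hα ((mem_Sk hw).2 (hsupp' α (Finsupp.mem_support_iff.2 hne)))
end System

/-! ### The derivative of the polynomial map at `0` -/

theorem hasFDerivAt_monom_zero {α : Fin n → ℕ} (h : 2 ≤ mlen α) :
    HasFDerivAt (monom α) (0 : (Fin n → ℝ) →L[ℝ] ℝ) 0 := by
  obtain ⟨i₀, hi₀⟩ := mlen_pos_exists (α := α) (by omega)
  rw [monom_split hi₀]
  have hα' : 1 ≤ mlen (decIdx α i₀) := by
    have := mlen_decIdx (α := α) hi₀
    omega
  have h1 : HasFDerivAt (fun y : Fin n → ℝ => y i₀)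
      (ContinuousLinearMap.proj (R := ℝ) (φ := fun _ : Fin n => ℝ) i₀) 0 :=
    (ContinuousLinearMap.proj (R := ℝ) (φ := fun _ : Fin n => ℝ) i₀).hasFDerivAt
  have h2 : HasFDerivAt (monom (decIdx α i₀)) (fderiv ℝ (monom (decIdx α i₀)) 0) 0 :=
    (((contDiff_monom (decIdx α i₀)).differentiable (by simp)) 0).hasFDerivAt
  have := h1.fun_mul h2
  have hz1 : (0 : Fin n → ℝ) i₀ = 0 := rfl
  have hz2 : monom (decIdx α i₀) (0 : Fin n → ℝ) = 0 := monom_zero_eq_zero hα'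
  rw [hz1, hz2] at this
  simpa using this

theorem hasFDerivAt_phi (a : Fin n → ((Fin n → ℕ) →₀ ℝ))
    (hsupp : ∀ k, ∀ α ∈ (a k).support, 2 ≤ mlen α) :
    HasFDerivAt (fun x (k : Fin n) => x k + (a k).sum fun α cα => cα * monom α x)
      (ContinuousLinearMap.id ℝ (Fin n → ℝ)) 0 := by
  rw [hasFDerivAt_pi']
  intro k
  rw [ContinuousLinearMap.comp_id]
  have h1 : HasFDerivAt (fun x : Fin n → ℝ => x k)
      (ContinuousLinearMap.proj (R := ℝ) (φ := fun _ : Fin n => ℝ) k) 0 :=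
    (ContinuousLinearMap.proj (R := ℝ) (φ := fun _ : Fin n => ℝ) k).hasFDerivAt
  have h2 : HasFDerivAt (fun x : Fin n → ℝ => (a k).sum fun α cα => cα * monom α x)
      (0 : (Fin n → ℝ) →L[ℝ] ℝ) 0 := by
    have hsum : HasFDerivAt (fun x : Fin n → ℝ => ∑ α ∈ (a k).support, (a k) α * monom α x)
        (∑ α ∈ (a k).support, (0 : (Fin n → ℝ) →L[ℝ] ℝ)) 0 := by
      apply HasFDerivAt.fun_sum
      intro α hα
      have := (hasFDerivAt_monom_zero (hsupp k α hα)).const_mul ((a k) α)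
      simpa using this
    simpa [Finsupp.sum] using hsum
  have := h1.fun_add h2
  simpa using this


end Aux

/-- Existence and uniqueness of the coefficients of Bellaïche's
polynomial change of coordinates, which produces privileged coordinates at `0`. -/
theorem psi_privileged_coordinates
    {n : ℕ} (hn : 0 < n) {w : Fin n → ℕ} (hw : IsWeight w)
    {V : Set (Fin n → ℝ)} (hV : IsOpen V) (h0 : (0 : Fin n → ℝ) ∈ V)
    {X : Fin n → (Fin n → ℝ) → (Fin n → ℝ)} (hX : IsHFrame w X V)
    (hX0 : ∀ j, X j 0 = Pi.single j 1) :
    (∃! a : Fin n → ((Fin n → ℕ) →₀ ℝ),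
      (∀ k, ∀ α ∈ (a k).support, wlen w α < w k ∧ 2 ≤ mlen α) ∧
      (∀ k, OrderEq w X
        (fun x => x k + (a k).sum fun α cα => cα * monom α x) 0 (w k))) ∧
    (∀ a : Fin n → ((Fin n → ℕ) →₀ ℝ),
      (∀ k, ∀ α ∈ (a k).support, wlen w α < w k ∧ 2 ≤ mlen α) →
      (∀ k, OrderEq w X
        (fun x => x k + (a k).sum fun α cα => cα * monom α x) 0 (w k)) →
      PrivilegedAt w X 0
        (fun x k => x k + (a k).sum fun α cα => cα * monom α x)) := by
  classical
  obtain ⟨L, hLs', hLz, hbr⟩ := hX.bracket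
  have hXs : ∀ i, SmOnV V (X i) :=
    fun i x hx => (hX.smooth i).contDiffAt (hV.mem_nhds hx)
  have hLs : ∀ i j k, SmOn V (L i j k) :=
    fun i j k x hx => (hLs' i j k).contDiffAt (hV.mem_nhds hx)
  have H := fun k => per_k hV h0 hXs hX0 hLs hLz hbr hw.pos k
  constructor
  · refine ⟨fun k => (H k).choose,
      ⟨fun k => (H k).choose_spec.1.1, fun k => (H k).choose_spec.1.2⟩, ?_⟩
    rintro a' ⟨ha1, ha2⟩
    funext k
    exact (H k).choose_spec.2 (a' k) ⟨ha1 k, ha2 k⟩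
  · intro a ha1 ha2
    refine ⟨?_, ha2⟩
    intro j
    have hd := hasFDerivAt_phi a (fun k α hα => (ha1 k α hα).2)
    rw [hd.fderiv, hX0 j]
    rfl

end Carnot
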